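/- arXiv:1303.4842 — 2 statements merged into one kernel-verified Lean document; each statement's English description precedes it below -/
import Mathlib

section
/- Any two maximal abelian subalgebras h₁, h₂ of u(n) (the real Lie algebra of skew-adjoint n×n complex matrices) are conjugate under the unitary group: there exists V ∈ U(n) such that V h₁ V* = h₂. -/
/-!
Commuting skew-adjoint matrices are simultaneously unitarily diagonalizable: multiplied by `i`
they become commuting Hermitian matrices, and `ℂⁿ` is the orthogonal sum of their joint
eigenspaces. So a unitary conjugation carries a maximal abelian `h ⊆ u(n)` into the diagonal
skew-adjoint matrices `𝔱`. Conjugation preserves maximality and `𝔱` is itself abelian, so the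
image is all of `𝔱`. Every maximal abelian subalgebra is therefore conjugate to `𝔱`, hence to
every other one.
-/

open Matrix

namespace LinearMap.IsSymmetric

open Module.End
open scoped Function

variable {𝕜 E ι m : Type*} [RCLike 𝕜] [NormedAddCommGroup E] [InnerProductSpace 𝕜 E]
  [FiniteDimensional 𝕜 E] [Fintype m]

theorem exists_orthonormalBasis_forall_apply_eq_smul {T : ι → E →ₗ[𝕜] E}
    (hT : ∀ i, (T i).IsSymmetric) (hC : Pairwise (Commute on T))
    (hm : Module.finrank 𝕜 E = Fintype.card m) :
    ∃ b : OrthonormalBasis m 𝕜 E, ∀ j i, ∃ μ : 𝕜, T i (b j) = μ • b j := by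
  classical
  have hW := directSum_isInternal_of_pairwise_commute hT hC
  have := hW.submodule_iSupIndep.fintypeNeBotOfFiniteDimensional
  have hW' := (orthogonalFamily_iInf_eigenspaces hT).comp
    (Subtype.val_injective (p := fun χ ↦ ⨅ i, eigenspace (T i) (χ i) ≠ ⊥))
  have hW₀ := DirectSum.isInternal_ne_bot_iff.mpr hW
  refine ⟨(hW₀.subordinateOrthonormalBasis hm hW').reindex (Fintype.equivFin m).symm,
    fun j i ↦ ?_⟩
  have hb := hW₀.subordinateOrthonormalBasis_subordinate hm (Fintype.equivFin m j) hW'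
  exact ⟨_, by simpa using mem_eigenspace_iff.mp ((Submodule.mem_iInf _).mp hb i)⟩

end LinearMap.IsSymmetric

section StarRing

variable {R : Type*} [Ring R] [StarRing R]

theorem StarRingEquiv.map_mem_skewAdjoint (φ : R ≃⋆+* R) {x : R} (hx : x ∈ skewAdjoint R) :
    φ x ∈ skewAdjoint R := by
  rw [skewAdjoint.mem_iff, ← map_star, skewAdjoint.mem_iff.mp hx, map_neg]

/-- For `R = Matrix (Fin n) (Fin n) ℂ` the skew-adjoint elements form `u(n)`, and these are its
maximal abelian subalgebras (maximality forces `S` to be a real subspace). -/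
structure IsMaximalAbelianSkewAdjoint (S : Set R) : Prop where
  subset_skewAdjoint : S ⊆ skewAdjoint R
  pairwise_commute : S.Pairwise Commute
  mem_of_forall_commute : ∀ x ∈ skewAdjoint R, (∀ y ∈ S, Commute x y) → x ∈ S

namespace IsMaximalAbelianSkewAdjoint

variable {S T : Set R}

theorem eq_of_subset (hS : IsMaximalAbelianSkewAdjoint S) (hT : T ⊆ skewAdjoint R)
    (hTc : T.Pairwise Commute) (hST : S ⊆ T) : S = T :=
  hST.antisymm fun x hx ↦ hS.mem_of_forall_commute x (hT hx) fun y hy ↦ by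
    obtain rfl | hne := eq_or_ne x y
    exacts [Commute.refl x, hTc hx (hST hy) hne]

theorem image (hS : IsMaximalAbelianSkewAdjoint S) (φ : R ≃⋆+* R) :
    IsMaximalAbelianSkewAdjoint (φ '' S) where
  subset_skewAdjoint := by
    rintro _ ⟨x, hx, rfl⟩
    exact φ.map_mem_skewAdjoint (hS.subset_skewAdjoint hx)
  pairwise_commute := by
    rintro _ ⟨x, hx, rfl⟩ _ ⟨y, hy, rfl⟩ hne
    exact (hS.pairwise_commute hx hy (ne_of_apply_ne φ hne)).map φ
  mem_of_forall_commute x hx hcomm := by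
    refine ⟨φ.symm x, hS.mem_of_forall_commute _ ?_ fun y hy ↦ ?_, φ.apply_symm_apply x⟩
    · exact φ.symm.map_mem_skewAdjoint hx
    · simpa using (hcomm (φ y) ⟨y, hy, rfl⟩).map φ.symm

end IsMaximalAbelianSkewAdjoint

end StarRing

namespace Matrix

variable {m : Type*} [Fintype m] [DecidableEq m]

theorem IsDiag.commute {α : Type*} [CommSemiring α] {A B : Matrix m m α} (hA : A.IsDiag)
    (hB : B.IsDiag) : Commute A B := by
  rw [← hA.diagonal_diag, ← hB.diagonal_diag]
  exact commute_diagonal _ _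

variable {𝕜 : Type*} [RCLike 𝕜]

theorem isDiag_star_toMatrix_mul_mul_toMatrix (b : OrthonormalBasis m 𝕜 (EuclideanSpace 𝕜 m))
    {A : Matrix m m 𝕜} (hA : ∀ j, ∃ μ : 𝕜, A *ᵥ b j = μ • b j) :
    (star ((EuclideanSpace.basisFun m 𝕜).toBasis.toMatrix b.toBasis) * A *
      (EuclideanSpace.basisFun m 𝕜).toBasis.toMatrix b.toBasis).IsDiag := by
  set U := (EuclideanSpace.basisFun m 𝕜).toBasis.toMatrix b.toBasis
  choose μ hμ using hA
  have hAU : A * U = U * diagonal μ := by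
    ext i j
    rw [mul_diagonal]
    simpa [U, Module.Basis.toMatrix_apply, mul_apply, mulVec, dotProduct, mul_comm]
      using congrFun (hμ j) i
  have hU : star U * U = 1 :=
    ((EuclideanSpace.basisFun m 𝕜).toMatrix_orthonormalBasis_mem_unitary b).1
  rw [Matrix.mul_assoc, hAU, ← Matrix.mul_assoc, hU, Matrix.one_mul]
  exact isDiag_diagonal μ

theorem exists_unitary_forall_isDiag_of_isHermitian {S : Set (Matrix m m 𝕜)}
    (hS : ∀ A ∈ S, A.IsHermitian) (hC : S.Pairwise Commute) :
    ∃ U ∈ unitaryGroup m 𝕜, ∀ A ∈ S, (star U * A * U).IsDiag := by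
  obtain ⟨b, hb⟩ := LinearMap.IsSymmetric.exists_orthonormalBasis_forall_apply_eq_smul
    (T := fun A : S ↦ toEuclideanLin A.1)
    (fun A ↦ isSymmetric_toEuclideanLin_iff.mpr (hS _ A.2))
    (fun A B hAB ↦ (hC A.2 B.2 (Subtype.coe_ne_coe.mpr hAB)).map (toLpLinAlgEquiv 2))
    finrank_euclideanSpace
  refine ⟨_, (EuclideanSpace.basisFun m 𝕜).toMatrix_orthonormalBasis_mem_unitary b,
    fun A hA ↦ isDiag_star_toMatrix_mul_mul_toMatrix b fun j ↦ ?_⟩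
  obtain ⟨μ, hμ⟩ := hb j ⟨A, hA⟩
  exact ⟨μ, by simpa [toLpLin_apply] using congrArg WithLp.ofLp hμ⟩

theorem exists_unitary_forall_isDiag_of_skewAdjoint {S : Set (Matrix m m ℂ)}
    (hS : S ⊆ skewAdjoint (Matrix m m ℂ)) (hC : S.Pairwise Commute) :
    ∃ U ∈ unitaryGroup m ℂ, ∀ A ∈ S, (star U * A * U).IsDiag := by
  have hHerm : ∀ A ∈ (Complex.I • ·) '' S, A.IsHermitian := by
    rintro _ ⟨A, hA, rfl⟩
    simp [IsHermitian, ← star_eq_conjTranspose, skewAdjoint.mem_iff.mp (hS hA)]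
  have hComm : ((Complex.I • ·) '' S).Pairwise Commute := by
    rintro _ ⟨A, hA, rfl⟩ _ ⟨B, hB, rfl⟩ hne
    exact ((hC hA hB fun h ↦ hne (h ▸ rfl)).smul_left _).smul_right _
  obtain ⟨U, hU, hdiag⟩ := exists_unitary_forall_isDiag_of_isHermitian hHerm hComm
  refine ⟨U, hU, fun A hA ↦ ?_⟩
  simpa [smul_smul] using (hdiag _ ⟨A, hA, rfl⟩).smul (-Complex.I)

theorem isMaximalAbelianSkewAdjoint_isDiag :
    IsMaximalAbelianSkewAdjoint {Z : Matrix m m ℂ | Z ∈ skewAdjoint _ ∧ Z.IsDiag} where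
  subset_skewAdjoint _ hZ := hZ.1
  pairwise_commute _ hZ _ hW _ := hZ.2.commute hW.2
  mem_of_forall_commute X hXskew hX := by
    refine ⟨hXskew, fun i j hij ↦ ?_⟩
    have hE : diagonal (Pi.single j Complex.I) ∈ skewAdjoint (Matrix m m ℂ) := by
      rw [skewAdjoint.mem_iff, star_eq_conjTranspose, diagonal_conjTranspose, diagonal_neg]
      congr 1
      ext k
      by_cases hk : k = j <;> simp [hk]
    have := congrFun₂ (hX _ ⟨hE, isDiag_diagonal _⟩).eq i j
    simpa [mul_diagonal, diagonal_mul, hij] using this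

end Matrix

theorem IsMaximalAbelianSkewAdjoint.exists_unitary_image_eq_isDiag {m : Type*} [Fintype m]
    [DecidableEq m] {S : Set (Matrix m m ℂ)} (hS : IsMaximalAbelianSkewAdjoint S) :
    ∃ u : unitaryGroup m ℂ,
      Unitary.conjStarAlgAut ℂ _ u '' S = {Z | Z ∈ skewAdjoint _ ∧ Z.IsDiag} := by
  obtain ⟨U, hU, hdiag⟩ :=
    exists_unitary_forall_isDiag_of_skewAdjoint hS.subset_skewAdjoint hS.pairwise_commute
  have hDiag := isMaximalAbelianSkewAdjoint_isDiag (m := m)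
  refine ⟨star ⟨U, hU⟩,
    (hS.image _).eq_of_subset hDiag.subset_skewAdjoint hDiag.pairwise_commute ?_⟩
  rintro _ ⟨X, hX, rfl⟩
  refine ⟨StarRingEquiv.map_mem_skewAdjoint _ (hS.subset_skewAdjoint hX), ?_⟩
  show (Unitary.conjStarAlgAut ℂ _ (star ⟨U, hU⟩) X).IsDiag
  simpa using hdiag X hX

/-- Any two maximal abelian subalgebras of `u(n)` (real subspaces of skew-adjoint matrices,
abelian, and maximal among such: every skew-adjoint matrix commuting with the subalgebra
already belongs to it) are conjugate under the unitary group `U(n)`. -/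
theorem stmt_17 (n : ℕ) (h₁ h₂ : Submodule ℝ (Matrix (Fin n) (Fin n) ℂ))
    (hskew₁ : ∀ X ∈ h₁, Xᴴ = -X)
    (hab₁ : ∀ X ∈ h₁, ∀ Y ∈ h₁, X * Y = Y * X)
    (hmax₁ : ∀ X : Matrix (Fin n) (Fin n) ℂ, Xᴴ = -X →
      (∀ Y ∈ h₁, X * Y = Y * X) → X ∈ h₁)
    (hskew₂ : ∀ X ∈ h₂, Xᴴ = -X)
    (hab₂ : ∀ X ∈ h₂, ∀ Y ∈ h₂, X * Y = Y * X)
    (hmax₂ : ∀ X : Matrix (Fin n) (Fin n) ℂ, Xᴴ = -X →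
      (∀ Y ∈ h₂, X * Y = Y * X) → X ∈ h₂) :
    ∃ V : Matrix (Fin n) (Fin n) ℂ, Vᴴ * V = 1 ∧
      (fun X => V * X * Vᴴ) '' (h₁ : Set (Matrix (Fin n) (Fin n) ℂ))
        = (h₂ : Set (Matrix (Fin n) (Fin n) ℂ)) := by
  obtain ⟨u₁, hu₁⟩ := IsMaximalAbelianSkewAdjoint.exists_unitary_image_eq_isDiag
    ⟨hskew₁, fun X hX Y hY _ ↦ hab₁ X hX Y hY, hmax₁⟩
  obtain ⟨u₂, hu₂⟩ := IsMaximalAbelianSkewAdjoint.exists_unitary_image_eq_isDiag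
    ⟨hskew₂, fun X hX Y hY _ ↦ hab₂ X hX Y hY, hmax₂⟩
  refine ⟨↑(star u₂ * u₁), Unitary.coe_star_mul_self _, ?_⟩
  calc (fun X ↦ ↑(star u₂ * u₁) * X * (↑(star u₂ * u₁))ᴴ) '' (h₁ : Set _)
      = Unitary.conjStarAlgAut ℂ _ (star u₂) ''
          (Unitary.conjStarAlgAut ℂ _ u₁ '' h₁) := by
        rw [Set.image_image]
        congr 1
        ext X
        simp [← star_eq_conjTranspose, mul_assoc]
    _ = Unitary.conjStarAlgAut ℂ _ (star u₂) ''
          (Unitary.conjStarAlgAut ℂ _ u₂ '' h₂) := by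
        rw [hu₁, hu₂]
    _ = h₂ := by
        rw [← Unitary.conjStarAlgAut_symm]
        exact (Unitary.conjStarAlgAut ℂ _ u₂).toEquiv.symm_image_image _
end

section
/- Let B be a real associative unital Banach algebra and G a closed subgroup of the group B^× of invertible elements. Then the set g = {x ∈ B : exp(tx) ∈ G for all t ∈ ℝ} is a closed real Lie subalgebra of B: it is closed in B, closed under addition and real scalar multiplication, and closed under the commutator bracket [x,y] = xy − yx. -/
/-!
Write `𝔤` for the set in question. If `f, g : ℝ → A` are differentiable at `0` with `f 0 = g 0 = 1`
and equal derivatives there, then `‖f (1/n) - 1‖, ‖g (1/n) - 1‖ = O(1/n)` and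
`‖f (1/n) - g (1/n)‖ = o(1/n)`, so the telescoping bound `‖aⁿ - bⁿ‖ ≤ n (1 + m)ⁿ ‖a - b‖` gives
`f (1/n)ⁿ - g (1/n)ⁿ → 0`. Applied to `exp (s u) exp (s v)` and `exp (s (u + v))` this is the Lie
product formula.

As `Bˣ → B` is an open embedding and `G` is closed, a unit of `B` that is a limit of elements of `G`
lies in `G`. This makes `𝔤` closed and, by the product formula, closed under addition. For the
bracket, `s ↦ exp (s x) y exp (-s x)` is a curve in `𝔤` (conjugation by elements of `G`) whose
derivative at `0` is `x y - y x`; its difference quotients lie in the closed subspace `𝔤`.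
-/

open Filter Topology Asymptotics NormedSpace

section PowerBounds

variable {A : Type*} [NormedRing A]

-- Bounds are in terms of `‖a - 1‖` rather than `‖a‖`, since `‖1‖` may exceed `1` here.
theorem norm_mul_pow_le_one_add_norm_sub_one_pow_mul (w b : A) (n : ℕ) :
    ‖w * b ^ n‖ ≤ (1 + ‖b - 1‖) ^ n * ‖w‖ := by
  induction n with
  | zero => simp
  | succ n ih =>
    calc ‖w * b ^ (n + 1)‖ = ‖w * b ^ n + w * b ^ n * (b - 1)‖ := by noncomm_ring
      _ ≤ ‖w * b ^ n‖ * (1 + ‖b - 1‖) := by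
        grw [norm_add_le, norm_mul_le (w * b ^ n)]; linarith
      _ ≤ (1 + ‖b - 1‖) ^ n * ‖w‖ * (1 + ‖b - 1‖) := by grw [ih]
      _ = (1 + ‖b - 1‖) ^ (n + 1) * ‖w‖ := by ring

theorem norm_mul_le_one_add_norm_sub_one_mul (a w : A) : ‖a * w‖ ≤ (1 + ‖a - 1‖) * ‖w‖ := by
  calc ‖a * w‖ = ‖w + (a - 1) * w‖ := by noncomm_ring
    _ ≤ (1 + ‖a - 1‖) * ‖w‖ := by grw [norm_add_le, norm_mul_le]; linarith

theorem norm_pow_sub_pow_le {a b : A} {m : ℝ} (ha : ‖a - 1‖ ≤ m) (hb : ‖b - 1‖ ≤ m) (n : ℕ) :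
    ‖a ^ n - b ^ n‖ ≤ n * (1 + m) ^ n * ‖a - b‖ := by
  have hm : 1 ≤ 1 + m := by linarith [norm_nonneg (a - 1)]
  induction n with
  | zero => simp
  | succ n ih =>
    calc ‖a ^ (n + 1) - b ^ (n + 1)‖ = ‖a * (a ^ n - b ^ n) + (a - b) * b ^ n‖ := by
          simp only [pow_succ']; noncomm_ring
      _ ≤ (1 + m) * (n * (1 + m) ^ n * ‖a - b‖) + (1 + m) ^ n * ‖a - b‖ := by
          grw [norm_add_le, norm_mul_le_one_add_norm_sub_one_mul,
            norm_mul_pow_le_one_add_norm_sub_one_pow_mul, ha, hb, ih]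
      _ ≤ (n + 1 : ℕ) * (1 + m) ^ (n + 1) * ‖a - b‖ := by
          have hpow : (1 + m) ^ n ≤ (1 + m) ^ (n + 1) := pow_le_pow_right₀ hm n.le_succ
          push_cast
          linear_combination mul_le_mul_of_nonneg_right hpow (norm_nonneg (a - b))

end PowerBounds

theorem tendsto_pow_sub_pow_of_hasDerivAt {A : Type*} [NormedRing A] [NormedSpace ℝ A]
    {f g : ℝ → A} {d : A} (hf0 : f 0 = 1) (hg0 : g 0 = 1) (hf : HasDerivAt f d 0)
    (hg : HasDerivAt g d 0) :
    Tendsto (fun n : ℕ => f (n : ℝ)⁻¹ ^ n - g (n : ℝ)⁻¹ ^ n) atTop (𝓝 0) := by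
  have hinv : Tendsto (fun n : ℕ => (n : ℝ)⁻¹) atTop (𝓝 0) := tendsto_inv_atTop_nhds_zero_nat
  obtain ⟨C, hC0, hC⟩ := (hf.isBigO_sub.norm_left.add hg.isBigO_sub.norm_left).exists_pos
  have hfg : Tendsto (fun n : ℕ => n * ‖f (n : ℝ)⁻¹ - g (n : ℝ)⁻¹‖) atTop (𝓝 0) := by
    have := hasDerivAt_iff_isLittleO_nhds_zero.1 (hf.sub hg)
    simp only [zero_add, Pi.sub_apply, hf0, hg0, sub_self, smul_zero, sub_zero] at this
    simpa [mul_comm] using (this.comp_tendsto hinv).norm_left.tendsto_div_nhds_zero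
  refine squeeze_zero_norm' ?_ (by simpa using hfg.const_mul (Real.exp C))
  filter_upwards [(hC.comp_tendsto hinv).bound] with n hn
  set a := f (n : ℝ)⁻¹
  set b := g (n : ℝ)⁻¹
  simp only [Function.comp_apply, hf0, hg0, sub_zero, Real.norm_eq_abs, abs_inv, Nat.abs_cast,
    ← div_eq_mul_inv] at hn
  have hab := (le_abs_self _).trans hn
  have hexp : (1 + C / n) ^ n ≤ Real.exp C := by
    simpa only [neg_div, sub_neg_eq_add, neg_neg] using
      Real.one_sub_div_pow_le_exp_neg (n := n) (t := -C) (by linarith [n.cast_nonneg (α := ℝ)])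
  calc ‖a ^ n - b ^ n‖ ≤ n * (1 + C / n) ^ n * ‖a - b‖ :=
        norm_pow_sub_pow_le (by linarith [norm_nonneg (b - 1)])
          (by linarith [norm_nonneg (a - 1)]) n
    _ = (1 + C / n) ^ n * (n * ‖a - b‖) := by ring
    _ ≤ Real.exp C * (n * ‖a - b‖) := by gcongr

theorem Subgroup.exists_mem_val_eq_of_tendsto {R ι : Type*} [NormedRing R] [CompleteSpace R]
    {G : Subgroup Rˣ} (hG : IsClosed (G : Set Rˣ)) {l : Filter ι} [l.NeBot] {w : ι → Rˣ}
    (hw : ∀ᶠ i in l, w i ∈ G) {a : R} (ha : IsUnit a)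
    (h : Tendsto (fun i => (w i : R)) l (𝓝 a)) : ∃ u ∈ G, (u : R) = a := by
  obtain ⟨u, rfl⟩ := ha
  exact ⟨u, hG.mem_of_tendsto (Units.isOpenEmbedding_val.tendsto_nhds_iff.2 h) hw, rfl⟩

section BanachAlgebra

variable {B : Type*} [NormedRing B] [NormedAlgebra ℝ B]

-- The library's lemmas on `NormedSpace.exp` are stated for normed `ℚ`-algebras.
noncomputable local instance : NormedAlgebra ℚ B := .restrictScalars ℚ ℝ B

namespace Subgroup

variable (G : Subgroup Bˣ)

def lieAlgebraSet : Set B := {x | ∀ t : ℝ, ∃ u ∈ G, (u : B) = exp (t • x)}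

variable {G}

theorem zero_mem_lieAlgebraSet : (0 : B) ∈ G.lieAlgebraSet :=
  fun _ => ⟨1, G.one_mem, by simp⟩

theorem smul_mem_lieAlgebraSet (c : ℝ) {x : B} (hx : x ∈ G.lieAlgebraSet) :
    c • x ∈ G.lieAlgebraSet := fun t => by
  simpa only [smul_smul] using hx (t * c)

end Subgroup

variable [CompleteSpace B]

theorem tendsto_exp_mul_exp_pow (u v : B) :
    Tendsto (fun n : ℕ => (exp ((n : ℝ)⁻¹ • u) * exp ((n : ℝ)⁻¹ • v)) ^ n) atTop
      (𝓝 (exp (u + v))) := by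
  have hf : HasDerivAt (fun s : ℝ => exp (s • u) * exp (s • v)) (u + v) 0 := by
    simpa using
      (hasDerivAt_exp_smul_const u (0 : ℝ)).fun_mul (hasDerivAt_exp_smul_const v (0 : ℝ))
  have hg : HasDerivAt (fun s : ℝ => exp (s • (u + v))) (u + v) 0 := by
    simpa using hasDerivAt_exp_smul_const (u + v) (0 : ℝ)
  have hpow : ∀ᶠ n : ℕ in atTop, exp ((n : ℝ)⁻¹ • (u + v)) ^ n = exp (u + v) := by
    filter_upwards [eventually_ne_atTop 0] with n hn
    rw [← exp_nsmul, ← Nat.cast_smul_eq_nsmul ℝ, smul_smul,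
      mul_inv_cancel₀ (by exact_mod_cast hn), one_smul]
  have hdiff := (tendsto_pow_sub_pow_of_hasDerivAt (by simp) (by simp) hf hg).add_const
    (exp (u + v))
  rw [zero_add] at hdiff
  exact hdiff.congr' (hpow.mono fun n hn => by simp only [hn, sub_add_cancel])

namespace Subgroup

variable {G : Subgroup Bˣ}

theorem add_mem_lieAlgebraSet (hG : IsClosed (G : Set Bˣ)) {x y : B} (hx : x ∈ G.lieAlgebraSet)
    (hy : y ∈ G.lieAlgebraSet) : x + y ∈ G.lieAlgebraSet := by
  intro t
  choose p hpG hp using fun n : ℕ => hx ((n : ℝ)⁻¹ * t)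
  choose q hqG hq using fun n : ℕ => hy ((n : ℝ)⁻¹ * t)
  refine exists_mem_val_eq_of_tendsto hG (l := atTop)
    (.of_forall fun n => G.pow_mem (G.mul_mem (hpG n) (hqG n)) n) (isUnit_exp _) ?_
  simpa only [Units.val_pow_eq_pow_val, Units.val_mul, hp, hq, mul_smul, smul_add] using
    tendsto_exp_mul_exp_pow (t • x) (t • y)

theorem isClosed_lieAlgebraSet (hG : IsClosed (G : Set Bˣ)) : IsClosed G.lieAlgebraSet := by
  refine isSeqClosed_iff_isClosed.1 fun x x₀ hx hlim t => ?_
  choose u huG hu using fun n => hx n t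
  exact exists_mem_val_eq_of_tendsto hG (.of_forall huG) (isUnit_exp _)
    (by simpa only [hu] using (hlim.const_smul t).exp)

def lieAlgebraSubmodule (hG : IsClosed (G : Set Bˣ)) : Submodule ℝ B where
  carrier := G.lieAlgebraSet
  zero_mem' := zero_mem_lieAlgebraSet
  add_mem' := add_mem_lieAlgebraSet hG
  smul_mem' := smul_mem_lieAlgebraSet

theorem exp_mul_mul_exp_neg_mem_lieAlgebraSet {x y : B} (hx : x ∈ G.lieAlgebraSet)
    (hy : y ∈ G.lieAlgebraSet) (s : ℝ) :
    exp (s • x) * y * exp (-(s • x)) ∈ G.lieAlgebraSet := by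
  intro t
  obtain ⟨P, hPG, hP⟩ := hx s
  obtain ⟨Q, hQG, hQ⟩ := hy t
  have hPinv : ((P⁻¹ : Bˣ) : B) = exp (-(s • x)) := by
    rw [← Ring.inverse_unit, hP, Ring.inverse_exp]
  refine ⟨P * Q * P⁻¹, G.mul_mem (G.mul_mem hPG hQG) (G.inv_mem hPG), ?_⟩
  rw [← hP, ← hPinv, ← smul_mul_assoc, ← mul_smul_comm, exp_units_conj, Units.val_mul,
    Units.val_mul, hQ]

theorem commutator_mem_lieAlgebraSet (hG : IsClosed (G : Set Bˣ)) {x y : B}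
    (hx : x ∈ G.lieAlgebraSet) (hy : y ∈ G.lieAlgebraSet) : x * y - y * x ∈ G.lieAlgebraSet := by
  have hF : HasDerivAt (fun s : ℝ => exp (s • x) * y * exp (-(s • x))) (x * y - y * x) 0 := by
    have := ((hasDerivAt_exp_smul_const x (0 : ℝ)).mul_const y).fun_mul
      (hasDerivAt_exp_smul_const (-x) (0 : ℝ))
    simp only [smul_neg, zero_smul, neg_zero, exp_zero, one_mul, mul_one] at this
    convert this using 1
    noncomm_ring
  refine (isClosed_lieAlgebraSet hG).mem_of_tendsto (hasDerivAt_iff_tendsto_slope.1 hF)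
    (.of_forall fun s => ?_)
  rw [slope_def_module]
  simp only [sub_zero, zero_smul, neg_zero, exp_zero, one_mul, mul_one]
  exact (lieAlgebraSubmodule hG).smul_mem s⁻¹
    ((lieAlgebraSubmodule hG).sub_mem (exp_mul_mul_exp_neg_mem_lieAlgebraSet hx hy s) hy)

end Subgroup

end BanachAlgebra

/-- If `B` is a real associative unital Banach algebra and `G` is a closed subgroup of the
group `B^×` of invertible elements, then `g = {x ∈ B : exp(tx) ∈ G for all t ∈ ℝ}` is a
closed real Lie subalgebra of `B`: it is closed in `B`, closed under addition and real scalar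
multiplication, and closed under the commutator bracket. -/
theorem stmt_19 {B : Type*} [NormedRing B] [NormedAlgebra ℝ B] [CompleteSpace B]
    (G : Subgroup Bˣ) (hG : IsClosed (G : Set Bˣ)) :
    IsClosed {x : B | ∀ t : ℝ, ∃ u ∈ G, (u : B) = NormedSpace.exp (t • x)} ∧
    (0 : B) ∈ {x : B | ∀ t : ℝ, ∃ u ∈ G, (u : B) = NormedSpace.exp (t • x)} ∧
    (∀ x y : B, x ∈ {x : B | ∀ t : ℝ, ∃ u ∈ G, (u : B) = NormedSpace.exp (t • x)} →
      y ∈ {x : B | ∀ t : ℝ, ∃ u ∈ G, (u : B) = NormedSpace.exp (t • x)} →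
      x + y ∈ {x : B | ∀ t : ℝ, ∃ u ∈ G, (u : B) = NormedSpace.exp (t • x)}) ∧
    (∀ (c : ℝ) (x : B), x ∈ {x : B | ∀ t : ℝ, ∃ u ∈ G, (u : B) = NormedSpace.exp (t • x)} →
      c • x ∈ {x : B | ∀ t : ℝ, ∃ u ∈ G, (u : B) = NormedSpace.exp (t • x)}) ∧
    (∀ x y : B, x ∈ {x : B | ∀ t : ℝ, ∃ u ∈ G, (u : B) = NormedSpace.exp (t • x)} →
      y ∈ {x : B | ∀ t : ℝ, ∃ u ∈ G, (u : B) = NormedSpace.exp (t • x)} →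
      x * y - y * x ∈ {x : B | ∀ t : ℝ, ∃ u ∈ G, (u : B) = NormedSpace.exp (t • x)}) :=
  ⟨G.isClosed_lieAlgebraSet hG, G.zero_mem_lieAlgebraSet, fun _ _ => G.add_mem_lieAlgebraSet hG,
    fun c _ => G.smul_mem_lieAlgebraSet c, fun _ _ => G.commutator_mem_lieAlgebraSet hG⟩
end
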